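/- Let α ∈ ℝ and β ≥ 0, and define U(ξ) := (αE + βA)ξ and Q(ξ) := ½⟨(αE + βA)ξ, ξ⟩ for ξ ∈ ℤ₊ⁿ. Then there exists a constant C₁ < ∞ such that for every ξ ∈ ℤ₊ⁿ with ‖U(ξ)‖ ≥ C₁, Σ_{i=1}^n [ e^{U_i(ξ)} (Q(ξ + eᵢ) − Q(ξ)) + 1_{ξᵢ > 0} (Q(ξ − eᵢ) − Q(ξ)) ] ≥ 0; that is, the expected one-step drift of Q for the embedded jump chain is nonnegative whenever ‖U(ξ)‖ is large. -/

import Mathlib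

open Finset Real Matrix

/-- `U(ξ) = (αE + βA)ξ`, the gradient of `Q`. -/
noncomputable def U {n : ℕ} (G : SimpleGraph (Fin n)) [DecidableRel G.Adj]
    (α β : ℝ) (ξ : Fin n → ℕ) : Fin n → ℝ :=
  (α • (1 : Matrix (Fin n) (Fin n) ℝ) + β • G.adjMatrix ℝ).mulVec fun j => (ξ j : ℝ)

/-- `Q(ξ) = ½⟨(αE + βA)ξ, ξ⟩`. -/
noncomputable def Q {n : ℕ} (G : SimpleGraph (Fin n)) [DecidableRel G.Adj]
    (α β : ℝ) (ξ : Fin n → ℕ) : ℝ :=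
  1 / 2 * ((α • (1 : Matrix (Fin n) (Fin n) ℝ) + β • G.adjMatrix ℝ).mulVec
      (fun j => (ξ j : ℝ)) ⬝ᵥ fun j => (ξ j : ℝ))

/-!
Both differences of `Q` are explicit: since the coupling matrix `αE + βA` is symmetric with
diagonal `α`, `Q(ξ ± eᵢ) - Q(ξ) = ±Uᵢ(ξ) + α/2`. Moreover `Uᵢ(ξ) ≥ 0` whenever `ξᵢ = 0`, because
then only the nonnegative neighbour terms `β ξⱼ` remain. Hence, with `u = Uᵢ(ξ)` and `c = α/2`,
the `i`-th summand is `eᵘ(u + c) + (c - u)` or, if `ξᵢ = 0`, `eᵘ(u + c)` with `u ≥ 0`; in both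
cases it is at least `|u| - K(c)` for a constant `K(c)`. Summing, the drift is at least
`‖U(ξ)‖₁ - n K(c) ≥ ‖U(ξ)‖₂ - n K(c)`.
-/

theorem Real.sqrt_sum_sq_le_sum_abs {ι : Type*} (s : Finset ι) (f : ι → ℝ) :
    √(∑ i ∈ s, f i ^ 2) ≤ ∑ i ∈ s, |f i| := by
  rw [Real.sqrt_le_left (sum_nonneg fun i _ => abs_nonneg (f i))]
  simpa only [sq_abs] using sum_sq_le_sq_sum_of_nonneg fun i _ => abs_nonneg (f i)

theorem Matrix.IsSymm.mulVec_add_single_dotProduct {ι : Type*} [Fintype ι] [DecidableEq ι]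
    {M : Matrix ι ι ℝ} (hM : M.IsSymm) (v : ι → ℝ) (i : ι) (t : ℝ) :
    M *ᵥ (v + Pi.single i t) ⬝ᵥ (v + Pi.single i t)
      = M *ᵥ v ⬝ᵥ v + 2 * t * (M *ᵥ v) i + M i i * t ^ 2 := by
  have hsymm : M *ᵥ Pi.single i t ⬝ᵥ v = t * (M *ᵥ v) i := by
    rw [dotProduct_comm, dotProduct_mulVec, ← vecMul_transpose, hM.eq, dotProduct_single, mul_comm]
  rw [mulVec_add, add_dotProduct, dotProduct_add, dotProduct_add, hsymm, dotProduct_single,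
    dotProduct_single, mulVec_single]
  simp only [Pi.smul_apply, col_apply, op_smul_eq_mul]
  ring

theorem cast_update_eq_add_single {ι : Type*} [DecidableEq ι] (ξ : ι → ℕ) (i : ι) (m : ℕ) :
    (fun j => (Function.update ξ i m j : ℝ))
      = (fun j => (ξ j : ℝ)) + Pi.single i (m - ξ i : ℝ) := by
  funext j
  rcases eq_or_ne j i with rfl | hj
  · simp
  · simp [hj]

noncomputable def driftDefect (c : ℝ) : ℝ :=
  3 * (|c| + 1) * exp |c|

theorem driftDefect_bounds (c : ℝ) :
    3 * (|c| + 1) ^ 2 ≤ driftDefect c ∧ |c| * exp |c| + 3 * |c| + 3 ≤ driftDefect c := by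
  have h := add_one_le_exp |c|
  have ha := abs_nonneg c
  unfold driftDefect
  constructor <;> nlinarith [mul_le_mul_of_nonneg_left h (by linarith : 0 ≤ |c| + 1)]

theorem sub_driftDefect_le_exp_mul {c u : ℝ} (hu : 0 ≤ u) :
    u - driftDefect c ≤ exp u * (u + c) := by
  obtain ⟨hK, hK'⟩ := driftDefect_bounds c
  have hc := neg_abs_le c
  rcases le_or_gt 0 (u + c) with h | h
  · nlinarith [mul_le_mul_of_nonneg_right (one_le_exp hu) h, abs_nonneg c]
  · have : exp u ≤ exp |c| := exp_le_exp.mpr (by linarith)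
    nlinarith [mul_le_mul_of_nonneg_right this (by linarith : 0 ≤ -(u + c)),
      mul_nonneg (exp_pos |c|).le (by linarith : 0 ≤ u + c + |c|)]

theorem abs_sub_driftDefect_le_exp_mul_add (c u : ℝ) :
    |u| - driftDefect c ≤ exp u * (u + c) + (c - u) := by
  obtain ⟨hK, hK'⟩ := driftDefect_bounds c
  have hc := neg_abs_le c
  rcases le_or_gt 0 u with hu | hu
  · rw [abs_of_nonneg hu]
    rcases le_or_gt 0 (u + c) with h | h
    · nlinarith [mul_le_mul_of_nonneg_right (add_one_le_exp u) h, sq_nonneg (2 * u + c - 1),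
        sq_abs c]
    · have : exp u ≤ exp |c| := exp_le_exp.mpr (by linarith)
      nlinarith [mul_le_mul_of_nonneg_right this (by linarith : 0 ≤ -(u + c)),
        mul_nonneg (exp_pos |c|).le (by linarith : 0 ≤ u + c + |c|)]
  · rw [abs_of_neg hu]
    -- `u eᵘ > -1` because `e⁻ᵘ > -u`
    have hue : -1 ≤ exp u * u := by
      have := mul_le_mul_of_nonneg_left (add_one_le_exp (-u)) (exp_pos u).le
      rw [← exp_add, add_neg_cancel, exp_zero] at this
      nlinarith [exp_pos u]
    have hce : -|c| ≤ exp u * c := by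
      have := exp_le_one_iff.mpr hu.le
      nlinarith [exp_pos u, abs_nonneg c]
    nlinarith [abs_nonneg c]

section Coupling

variable {n : ℕ} (G : SimpleGraph (Fin n)) [DecidableRel G.Adj] (α β : ℝ)

theorem U_apply (ξ : Fin n → ℕ) (i : Fin n) :
    U G α β ξ i = α * ξ i + β * ∑ j ∈ G.neighborFinset i, (ξ j : ℝ) := by
  simp [U, add_mulVec, smul_mulVec, SimpleGraph.adjMatrix_mulVec_apply]

theorem U_nonneg_of_eq_zero (hβ : 0 ≤ β) {ξ : Fin n → ℕ} {i : Fin n} (hξ : ξ i = 0) :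
    0 ≤ U G α β ξ i := by
  rw [U_apply, hξ, Nat.cast_zero, mul_zero, zero_add]
  positivity

theorem Q_update_sub (ξ : Fin n → ℕ) (i : Fin n) (m : ℕ) :
    Q G α β (Function.update ξ i m) - Q G α β ξ
      = (m - ξ i : ℝ) * U G α β ξ i + α / 2 * (m - ξ i : ℝ) ^ 2 := by
  have hM : (α • (1 : Matrix (Fin n) (Fin n) ℝ) + β • G.adjMatrix ℝ).IsSymm :=
    (isSymm_one.smul α).add ((G.isSymm_adjMatrix).smul β)
  have hdiag : (α • (1 : Matrix (Fin n) (Fin n) ℝ) + β • G.adjMatrix ℝ) i i = α := by simp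
  rw [Q, Q, U, cast_update_eq_add_single, hM.mulVec_add_single_dotProduct, hdiag]
  ring

theorem abs_U_sub_driftDefect_le (hβ : 0 ≤ β) (ξ : Fin n → ℕ) (i : Fin n) :
    |U G α β ξ i| - driftDefect (α / 2)
      ≤ exp (U G α β ξ i) * (Q G α β (Function.update ξ i (ξ i + 1)) - Q G α β ξ)
        + (if 0 < ξ i then (1 : ℝ) else 0)
          * (Q G α β (Function.update ξ i (ξ i - 1)) - Q G α β ξ) := by
  rw [Q_update_sub]
  push_cast
  split_ifs with hξ
  · rw [Q_update_sub, Nat.cast_pred hξ]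
    linarith [abs_sub_driftDefect_le_exp_mul_add (α / 2) (U G α β ξ i)]
  · have hU := U_nonneg_of_eq_zero G α β hβ (Nat.eq_zero_of_not_pos hξ)
    rw [abs_of_nonneg hU]
    linarith [sub_driftDefect_le_exp_mul (c := α / 2) hU]

end Coupling

/-- For `β ≥ 0` there is a constant `C₁ < ∞` such that whenever `‖U(ξ)‖ ≥ C₁`, the
expected one-step drift of `Q` for the embedded jump chain is nonnegative:
`Σᵢ [e^{Uᵢ(ξ)}(Q(ξ+eᵢ)−Q(ξ)) + 1_{ξᵢ>0}(Q(ξ−eᵢ)−Q(ξ))] ≥ 0`. -/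
theorem stmt13 {n : ℕ} (G : SimpleGraph (Fin n)) [DecidableRel G.Adj]
    (α β : ℝ) (hβ : 0 ≤ β) :
    ∃ C₁ : ℝ, ∀ ξ : Fin n → ℕ,
      C₁ ≤ Real.sqrt (∑ i, U G α β ξ i ^ 2) →
      0 ≤ ∑ i, (Real.exp (U G α β ξ i)
            * (Q G α β (Function.update ξ i (ξ i + 1)) - Q G α β ξ)
          + (if 0 < ξ i then (1 : ℝ) else 0)
            * (Q G α β (Function.update ξ i (ξ i - 1)) - Q G α β ξ)) := by
  refine ⟨n * driftDefect (α / 2), fun ξ hξ => ?_⟩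
  have hsum := sum_le_sum fun i (_ : i ∈ univ) => abs_U_sub_driftDefect_le G α β hβ ξ i
  rw [sum_sub_distrib, sum_const, card_univ, Fintype.card_fin, nsmul_eq_mul] at hsum
  linarith [Real.sqrt_sum_sq_le_sum_abs univ (U G α β ξ)]
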